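/- Let 1 ≤ k ≤ d be integers, let j ∈ I, and let t > 0. Then for every x ∈ ℝ^d with x ≠ 0: ∫_{ℝ^d} γ̃_{k,d} P_j(x+iy) |x+iy|^{-(2d+k)} 1_{|x+iy| ≥ t} dy = 𝒦_j^t(x), where P_j(x+iy) = Π_{l=1}^{k} (x_{j_l} + i y_{j_l}) and |x+iy|² = |x|² + |y|². In particular, for |x| ≥ t the integral equals γ_{k,d} P_j(x)|x|^{-(d+k)}. -/

import Mathlib

open MeasureTheory Filter
open Set
open scoped ENNReal NNReal

noncomputable section

/-- `ℝ^d` with the Euclidean norm. -/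
abbrev Ed (d : ℕ) : Type := EuclideanSpace ℝ (Fin d)

/-- The normalizing constant `γ_{k,d} = Γ((k+d)/2)/(π^{d/2} Γ(k/2))`. -/
def rieszConst (k d : ℕ) : ℝ :=
  Real.Gamma (((k : ℝ) + d) / 2) / (Real.pi ^ ((d : ℝ) / 2) * Real.Gamma ((k : ℝ) / 2))

/-- The normalizing constant `γ̃_{k,d} = Γ(d+k/2)/(π^d Γ(k/2))`. -/
def rieszConstC (k d : ℕ) : ℝ :=
  Real.Gamma ((d : ℝ) + (k : ℝ) / 2) / (Real.pi ^ d * Real.Gamma ((k : ℝ) / 2))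

/-- `S_{d-1} = 2π^{d/2}/Γ(d/2)`, the surface area of the unit sphere `S^{d-1}`. -/
def surf (d : ℕ) : ℝ := 2 * Real.pi ^ ((d : ℝ) / 2) / Real.Gamma ((d : ℝ) / 2)

/-- Multi-indices `j = (j_1, …, j_k) ∈ {1,…,d}^k` with pairwise distinct entries. -/
abbrev Idx (d k : ℕ) : Type := {j : Fin k → Fin d // Function.Injective j}

/-- The monomial `P_j(x) = x_{j_1} ⋯ x_{j_k}`. -/
def Pmon (d k : ℕ) (j : Idx d k) (x : Ed d) : ℝ := ∏ l, x (j.1 l)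

/-- The restricted kernel `𝒦_j^t`. -/
def Kres (d k : ℕ) (j : Idx d k) (t : ℝ) (x : Ed d) : ℝ :=
  if t ≤ ‖x‖ then rieszConst k d * Pmon d k j x / ‖x‖ ^ (d + k)
  else rieszConstC k d * surf d * Pmon d k j x / ‖x‖ ^ (d + k) *
    ∫ r in Set.Ioi (Real.sqrt (t ^ 2 / ‖x‖ ^ 2 - 1)),
      r ^ (d - 1) * (1 + r ^ 2) ^ (-((d : ℝ) + (k : ℝ) / 2))

/-! ### auxiliary lemmas -/

lemma coord_le_norm {d : ℕ} (y : Ed d) (i : Fin d) : |y i| ≤ ‖y‖ := by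
  rw [EuclideanSpace.norm_eq]
  have h1 : |y i| = Real.sqrt (y i ^ 2) := by rw [Real.sqrt_sq_eq_abs]
  rw [h1]
  apply Real.sqrt_le_sqrt
  have := Finset.single_le_sum (f := fun l => ‖y l‖ ^ 2)
    (fun l _ => by positivity) (Finset.mem_univ i)
  simpa [Real.norm_eq_abs, sq_abs] using this

noncomputable def negC (d : ℕ) (i0 : Fin d) : Ed d ≃ₗᵢ[ℝ] Ed d where
  toLinearEquiv := LinearEquiv.ofInvolutive
    { toFun := fun y => WithLp.toLp 2 (fun i => if i = i0 then -(y i) else y i)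
      map_add' := by
        intro y z; ext i; by_cases h : i = i0 <;> simp [h] <;> try ring
      map_smul' := by
        intro c y; ext i; by_cases h : i = i0 <;> simp [h] }
    (by intro y; ext i; by_cases h : i = i0 <;> simp [h])
  norm_map' := by
    intro y
    rw [EuclideanSpace.norm_eq, EuclideanSpace.norm_eq]
    congr 1
    refine Finset.sum_congr rfl fun i _ => ?_
    by_cases h : i = i0 <;> simp [h, LinearEquiv.ofInvolutive]

lemma negC_apply {d : ℕ} (i0 : Fin d) (y : Ed d) (i : Fin d) :
    negC d i0 y i = if i = i0 then -(y i) else y i := rfl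

lemma negC_norm {d : ℕ} (i0 : Fin d) (y : Ed d) : ‖negC d i0 y‖ = ‖y‖ :=
  (negC d i0).norm_map y

lemma integral_reflection_zero {d : ℕ} (f : Ed d → ℂ) (i0 : Fin d)
    (hf : ∀ y, f (negC d i0 y) = - f y) : ∫ y, f y = 0 := by
  have h1 : ∫ y, f y = ∫ y, f (negC d i0 y) :=
    ((negC d i0).measurePreserving.integral_comp
      (negC d i0).toHomeomorph.measurableEmbedding f).symm
  have h2 : ∫ y, f (negC d i0 y) = - ∫ y, f y := by
    simp only [hf]
    exact integral_neg f
  have h3 : (2:ℂ) * ∫ y, f y = 0 := by linear_combination h1.trans h2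
  simpa using h3

lemma integrable_aux {d : ℕ} {a : ℝ} (ha : 0 < a) {p : ℝ} (hp : (d:ℝ) < p) :
    Integrable (fun y : Ed d => (a^2 + ‖y‖^2) ^ (-p/2)) := by
  have h : Integrable (fun y : Ed d => (1 + ‖y‖^2) ^ (-p/2)) :=
    integrable_rpow_neg_one_add_norm_sq (by rwa [finrank_euclideanSpace_fin])
  set c : ℝ := min (a^2) 1 with hc
  have hc0 : 0 < c := lt_min (by positivity) one_pos
  refine (h.const_mul (c ^ (-p/2))).mono' ?_ (Filter.Eventually.of_forall fun y => ?_)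
  · refine Continuous.aestronglyMeasurable ?_
    refine Continuous.rpow_const (by continuity) fun y => Or.inl (by positivity)
  · have hs : (0:ℝ) < 1 + ‖y‖^2 := by positivity
    have hbase : c * (1 + ‖y‖^2) ≤ a^2 + ‖y‖^2 := by
      have h1 : c ≤ a^2 := min_le_left _ _
      have h2 : c ≤ 1 := min_le_right _ _
      nlinarith [sq_nonneg ‖y‖]
    have h3 : (a^2 + ‖y‖^2) ^ (-p/2) ≤ (c * (1 + ‖y‖^2)) ^ (-p/2) := by
      apply Real.rpow_le_rpow_of_nonpos (by positivity) hbase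
      have : (0:ℝ) < p := lt_of_le_of_lt (Nat.cast_nonneg d) hp
      linarith
    rw [Real.norm_eq_abs, abs_of_nonneg (by positivity)]
    calc (a^2 + ‖y‖^2) ^ (-p/2) ≤ (c * (1 + ‖y‖^2)) ^ (-p/2) := h3
      _ = c ^ (-p/2) * (1 + ‖y‖^2) ^ (-p/2) := Real.mul_rpow hc0.le (by positivity)

lemma integrable_pow_mul {d k : ℕ} (hd : 1 ≤ d) {a : ℝ} (ha : 0 < a) {m : ℕ} (hm : m ≤ k) :
    Integrable (fun y : Ed d => ‖y‖^m * (a^2 + ‖y‖^2) ^ (-((d:ℝ)+(k:ℝ)/2))) := by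
  have hp : (d:ℝ) < 2*(d:ℝ)+(k:ℝ)-(m:ℝ) := by
    have h1 : (m:ℝ) ≤ (k:ℝ) := by exact_mod_cast hm
    have h2 : (1:ℝ) ≤ (d:ℝ) := by exact_mod_cast hd
    linarith
  refine (integrable_aux ha hp).mono' ?_ (Filter.Eventually.of_forall fun y => ?_)
  · refine Continuous.aestronglyMeasurable ?_
    exact (continuous_norm.pow m).mul
      (Continuous.rpow_const (by continuity) fun y => Or.inl (by positivity))
  · have hs : (0:ℝ) < a^2 + ‖y‖^2 := by positivity
    rw [Real.norm_eq_abs, abs_of_nonneg (by positivity)]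
    have hle : ‖y‖ ≤ Real.sqrt (a^2 + ‖y‖^2) := by
      rw [Real.le_sqrt (norm_nonneg y) hs.le]
      nlinarith [sq_nonneg a]
    have e1 : (‖y‖:ℝ)^m ≤ (a^2 + ‖y‖^2) ^ ((m:ℝ)/2) := by
      calc (‖y‖:ℝ)^m ≤ (Real.sqrt (a^2 + ‖y‖^2))^m := pow_le_pow_left₀ (norm_nonneg y) hle m
        _ = (a^2 + ‖y‖^2) ^ ((m:ℝ)/2) := by
            rw [← Real.rpow_natCast (Real.sqrt _) m, Real.sqrt_eq_rpow,
              ← Real.rpow_mul hs.le]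
            congr 1
            ring
    calc ‖y‖^m * (a^2 + ‖y‖^2) ^ (-((d:ℝ)+(k:ℝ)/2))
        ≤ (a^2 + ‖y‖^2) ^ ((m:ℝ)/2) * (a^2 + ‖y‖^2) ^ (-((d:ℝ)+(k:ℝ)/2)) := by
          apply mul_le_mul_of_nonneg_right e1 (by positivity)
      _ = (a^2 + ‖y‖^2) ^ (-(2*(d:ℝ)+(k:ℝ)-(m:ℝ))/2) := by
          rw [← Real.rpow_add hs]; congr 1; ring

lemma real_betaIntegral {α β : ℝ} (hα : 0 < α) (hβ : 0 < β) :
    ∫ x in Ioo (0:ℝ) 1, x ^ (α - 1) * (1 - x) ^ (β - 1) =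
      Real.Gamma α * Real.Gamma β / Real.Gamma (α + β) := by
  have h1 : Complex.Gamma α * Complex.Gamma β
      = Complex.Gamma (↑α + ↑β) * Complex.betaIntegral α β :=
    Complex.Gamma_mul_Gamma_eq_betaIntegral (by simpa using hα) (by simpa using hβ)
  have h2 : Complex.betaIntegral α β
      = ((∫ x in Ioo (0:ℝ) 1, x ^ (α - 1) * (1 - x) ^ (β - 1) : ℝ) : ℂ) := by
    rw [Complex.betaIntegral]
    rw [show ∫ x in Ioo (0:ℝ) 1, x ^ (α - 1) * (1 - x) ^ (β - 1)
        = ∫ x in (0:ℝ)..1, x ^ (α - 1) * (1 - x) ^ (β - 1) by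
      rw [intervalIntegral.integral_of_le (by norm_num), integral_Ioc_eq_integral_Ioo]]
    rw [← intervalIntegral.integral_ofReal]
    refine intervalIntegral.integral_congr fun x hx => ?_
    rw [uIcc_of_le (by norm_num : (0:ℝ) ≤ 1)] at hx
    rw [Complex.ofReal_mul, Complex.ofReal_cpow hx.1 (α - 1),
      Complex.ofReal_cpow (by linarith [hx.2] : (0:ℝ) ≤ 1 - x) (β - 1)]
    push_cast
    ring
  have h3 : Real.Gamma α * Real.Gamma β = Real.Gamma (α + β) *
      ∫ x in Ioo (0:ℝ) 1, x ^ (α - 1) * (1 - x) ^ (β - 1) := by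
    have h4 := h1
    rw [h2, ← Complex.ofReal_add, Complex.Gamma_ofReal, Complex.Gamma_ofReal,
      Complex.Gamma_ofReal, ← Complex.ofReal_mul, ← Complex.ofReal_mul] at h4
    exact_mod_cast h4
  rw [h3, mul_div_cancel_left₀ _ (Real.Gamma_pos_of_pos (by linarith)).ne']

lemma beta_Ioi {α β : ℝ} (hα : 0 < α) (hβ : 0 < β) :
    ∫ u in Ioi (0:ℝ), u ^ (α - 1) * (1 + u) ^ (-(α + β)) =
      Real.Gamma α * Real.Gamma β / Real.Gamma (α + β) := by
  have himg : (fun x : ℝ => x / (1 - x)) '' Ioo 0 1 = Ioi 0 := by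
    ext u
    constructor
    · rintro ⟨x, ⟨hx0, hx1⟩, rfl⟩
      exact div_pos hx0 (by linarith)
    · intro hu
      refine ⟨u / (1 + u), ⟨div_pos hu (by linarith [hu.out]), ?_⟩, ?_⟩
      · rw [div_lt_one (by linarith [hu.out])]; linarith [hu.out]
      · have h1u : (0:ℝ) < 1 + u := by linarith [hu.out]
        field_simp
        ring
  have hderiv : ∀ x ∈ Ioo (0:ℝ) 1, HasDerivWithinAt (fun x : ℝ => x / (1 - x))
      ((1 - x)⁻¹ ^ 2) (Ioo 0 1) x := by
    intro x hx
    have h1x : (1:ℝ) - x ≠ 0 := by have := hx.2; intro h; linarith [sub_eq_zero.mp h]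
    have h2 := ((hasDerivAt_id x).div ((hasDerivAt_id x).const_sub 1) h1x)
    refine h2.hasDerivWithinAt.congr_deriv ?_
    simp only [id]
    field_simp
    ring
  have hinj : InjOn (fun x : ℝ => x / (1 - x)) (Ioo 0 1) := by
    intro p hp q hq h
    have hp1 : (1:ℝ) - p > 0 := by linarith [hp.2]
    have hq1 : (1:ℝ) - q > 0 := by linarith [hq.2]
    field_simp at h
    nlinarith
  have h5 := integral_image_eq_integral_abs_deriv_smul measurableSet_Ioo hderiv hinj
    (fun u => u ^ (α - 1) * (1 + u) ^ (-(α + β)))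
  rw [himg] at h5
  rw [h5, ← real_betaIntegral hα hβ]
  refine setIntegral_congr_fun measurableSet_Ioo fun x hx => ?_
  have hx0 : 0 < x := hx.1
  have hx1 : (0:ℝ) < 1 - x := by linarith [hx.2]
  have h1 : 1 + x / (1 - x) = (1 - x)⁻¹ := by field_simp; ring
  rw [smul_eq_mul, h1, abs_of_nonneg (by positivity), Real.div_rpow hx0.le hx1.le,
    Real.inv_rpow hx1.le, ← Real.rpow_neg hx1.le, neg_neg, inv_pow, ← Real.rpow_natCast (1-x) 2,
    ← Real.rpow_neg hx1.le]
  rw [div_eq_mul_inv, ← Real.rpow_neg hx1.le]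
  rw [mul_comm ((1-x) ^ (-(2:ℕ):ℝ)), mul_assoc, mul_assoc, ← Real.rpow_add hx1,
    ← Real.rpow_add hx1]
  congr 1
  push_cast
  ring

lemma J_val (d k : ℕ) (hd : 1 ≤ d) (hk : 1 ≤ k) :
    ∫ s in Ioi (0:ℝ), s ^ (d-1) * (1 + s^2) ^ (-((d:ℝ) + (k:ℝ)/2)) =
      Real.Gamma ((d:ℝ)/2) * Real.Gamma (((d:ℝ)+(k:ℝ))/2) / (2 * Real.Gamma ((d:ℝ) + (k:ℝ)/2)) := by
  have h := integral_comp_rpow_Ioi_of_pos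
    (g := fun u => u ^ ((d:ℝ)/2 - 1) * (1+u) ^ (-((d:ℝ)/2 + ((d:ℝ)+(k:ℝ))/2))) (p := 2) two_pos
  have h2 : ∫ x in Ioi (0:ℝ),
        (2 * x ^ ((2:ℝ)-1)) • ((x ^ (2:ℝ)) ^ ((d:ℝ)/2 - 1) * (1+x ^ (2:ℝ)) ^ (-((d:ℝ)/2 + ((d:ℝ)+(k:ℝ))/2)))
      = ∫ x in Ioi (0:ℝ), 2 * (x ^ (d-1) * (1 + x^2) ^ (-((d:ℝ) + (k:ℝ)/2))) := by
    refine setIntegral_congr_fun measurableSet_Ioi fun x hx => ?_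
    have hx0 : (0:ℝ) < x := hx
    have hsq : x ^ (2:ℝ) = x ^ 2 := by
      rw [← Real.rpow_natCast x 2]; norm_num
    have e1 : ((x^2:ℝ)) ^ ((d:ℝ)/2 - 1) = x ^ ((d:ℝ) - 2) := by
      rw [← Real.rpow_natCast x 2, ← Real.rpow_mul hx0.le]
      congr 1
      push_cast; ring
    have e2 : x ^ ((2:ℝ)-1) = x := by norm_num
    have e3 : x * x ^ ((d:ℝ)-2) = x ^ (d-1) := by
      nth_rewrite 1 [← Real.rpow_one x]
      rw [← Real.rpow_add hx0, ← Real.rpow_natCast x (d-1)]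
      congr 1
      rw [Nat.cast_sub hd]; push_cast; ring
    rw [smul_eq_mul, hsq, e1, e2,
      show -((d:ℝ)/2 + ((d:ℝ)+(k:ℝ))/2) = -((d:ℝ) + (k:ℝ)/2) from by ring,
      mul_assoc 2 x, ← mul_assoc x, e3]
  rw [h2, integral_const_mul,
    beta_Ioi (by positivity : (0:ℝ) < (d:ℝ)/2) (by positivity : (0:ℝ) < ((d:ℝ)+(k:ℝ))/2),
    show (d:ℝ)/2 + ((d:ℝ)+(k:ℝ))/2 = (d:ℝ) + (k:ℝ)/2 from by ring] at h
  have hG : Real.Gamma ((d:ℝ) + (k:ℝ)/2) ≠ 0 :=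
    (Real.Gamma_pos_of_pos (by positivity)).ne'
  rw [eq_div_iff hG] at h
  rw [eq_div_iff (mul_ne_zero two_ne_zero hG)]
  linear_combination h

lemma scale_int (d k : ℕ) (hd : 1 ≤ d) {a : ℝ} (ha : 0 < a) (c : ℝ) :
    ∫ r in Ioi (a * c), r ^ (d-1) * (a^2 + r^2) ^ (-((d:ℝ) + (k:ℝ)/2)) =
      a ^ (-((d:ℝ) + (k:ℝ))) * ∫ s in Ioi c, s ^ (d-1) * (1 + s^2) ^ (-((d:ℝ) + (k:ℝ)/2)) := by
  set q : ℝ := (d:ℝ) + (k:ℝ)/2 with hq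
  have h := integral_comp_mul_left_Ioi
    (fun r => r ^ (d-1) * (a^2 + r^2) ^ (-q)) c ha
  have h2 : ∫ x in Ioi c, (fun r => r ^ (d-1) * (a^2 + r^2) ^ (-q)) (a * x)
      = ∫ x in Ioi c, (a ^ (d-1) * (a^2) ^ (-q)) * (x ^ (d-1) * (1 + x^2) ^ (-q)) := by
    refine setIntegral_congr_fun measurableSet_Ioi fun x _ => ?_
    show (a*x) ^ (d-1) * (a^2 + (a*x)^2) ^ (-q) = _
    rw [show a^2 + (a*x)^2 = a^2 * (1 + x^2) from by ring,
      Real.mul_rpow (by positivity) (by positivity), mul_pow]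
    ring
  rw [h2, integral_const_mul, smul_eq_mul] at h
  have key : a * (a ^ (d-1) * (a^2) ^ (-q)) = a ^ (-((d:ℝ) + (k:ℝ))) := by
    have e1 : a * a ^ (d-1) = a ^ (d:ℕ) := by
      rw [← pow_succ']
      congr 1
      omega
    have e2 : ((a:ℝ)^2) ^ (-q) = a ^ ((2:ℝ) * (-q)) := by
      rw [Real.rpow_mul ha.le, Real.rpow_two]
    rw [← mul_assoc, e1, e2, ← Real.rpow_natCast a d, ← Real.rpow_add ha]
    congr 1
    rw [hq]; ring
  calc ∫ r in Ioi (a * c), r ^ (d-1) * (a^2 + r^2) ^ (-q)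
      = a * (a⁻¹ * ∫ r in Ioi (a * c), (fun r => r ^ (d-1) * (a^2 + r^2) ^ (-q)) r) := by
        field_simp
    _ = a * ((a ^ (d-1) * (a^2) ^ (-q)) * ∫ s in Ioi c, s ^ (d-1) * (1 + s^2) ^ (-q)) := by
        rw [← h]
    _ = _ := by rw [← mul_assoc, key]

lemma surf_eq (d : ℕ) (hd : 1 ≤ d) :
    (d:ℝ) * (Real.sqrt Real.pi ^ d / Real.Gamma ((d:ℝ)/2 + 1)) = surf d := by
  have hd0 : (0:ℝ) < d := by exact_mod_cast hd
  have h1 : Real.sqrt Real.pi ^ d = Real.pi ^ ((d:ℝ)/2) := by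
    rw [Real.sqrt_eq_rpow, ← Real.rpow_natCast (Real.pi ^ ((1:ℝ)/2)) d,
      ← Real.rpow_mul Real.pi_pos.le]
    congr 1; ring
  have h2 : Real.Gamma ((d:ℝ)/2 + 1) = ((d:ℝ)/2) * Real.Gamma ((d:ℝ)/2) :=
    Real.Gamma_add_one (by positivity)
  have hΓ : Real.Gamma ((d:ℝ)/2) ≠ 0 := (Real.Gamma_pos_of_pos (by positivity)).ne'
  rw [h1, h2, surf]
  field_simp

lemma const_id (k d : ℕ) (hk : 1 ≤ k) (hd : 1 ≤ d) :
    rieszConstC k d * (surf d * (Real.Gamma ((d:ℝ)/2) * Real.Gamma (((d:ℝ)+(k:ℝ))/2)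
      / (2 * Real.Gamma ((d:ℝ)+(k:ℝ)/2)))) = rieszConst k d := by
  have hd0 : (0:ℝ) < d := by exact_mod_cast hd
  have hk0 : (0:ℝ) < k := by exact_mod_cast hk
  have hπ : (0:ℝ) < Real.pi := Real.pi_pos
  have h1 : (Real.pi ^ d : ℝ) = Real.pi ^ ((d:ℝ)/2) * Real.pi ^ ((d:ℝ)/2) := by
    rw [← Real.rpow_natCast Real.pi d, ← Real.rpow_add hπ]; congr 1; ring
  have hΓ1 : Real.Gamma ((d:ℝ)/2) ≠ 0 := (Real.Gamma_pos_of_pos (by positivity)).ne'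
  have hΓ2 : Real.Gamma ((k:ℝ)/2) ≠ 0 := (Real.Gamma_pos_of_pos (by positivity)).ne'
  have hΓ3 : Real.Gamma ((d:ℝ)+(k:ℝ)/2) ≠ 0 := (Real.Gamma_pos_of_pos (by positivity)).ne'
  have hπ2 : Real.pi ^ ((d:ℝ)/2) ≠ 0 := (Real.rpow_pos_of_pos hπ _).ne'
  rw [rieszConstC, rieszConst, surf, h1,
    show ((k:ℝ)+(d:ℝ))/2 = ((d:ℝ)+(k:ℝ))/2 from by ring]
  field_simp

/-- One term in the binomial expansion of the product kernel. -/
def Kterm (d k : ℕ) (j : Idx d k) (x : Ed d) (S : Finset (Fin k)) (y : Ed d) : ℂ :=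
  ((∏ l ∈ S, Complex.I * (y (j.1 l) : ℂ)) * ∏ l ∈ Finset.univ \ S, ((x (j.1 l) : ℂ))) *
    ((rieszConstC k d * (‖x‖^2 + ‖y‖^2) ^ (-((d:ℝ)+(k:ℝ)/2)) : ℝ) : ℂ)

lemma Kterm_integrable (d k : ℕ) (hd : 1 ≤ d) (j : Idx d k) {x : Ed d} (hx : x ≠ 0)
    (S : Finset (Fin k)) : Integrable (Kterm d k j x S) := by
  have ha : 0 < ‖x‖ := norm_pos_iff.mpr hx
  have hm : S.card ≤ k := le_trans (Finset.card_le_univ S) (by simp)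
  set C : ℝ := (∏ l ∈ Finset.univ \ S, |x (j.1 l)|) * |rieszConstC k d| with hC
  refine ((integrable_pow_mul hd ha hm).const_mul C).mono' ?_
    (Filter.Eventually.of_forall fun y => ?_)
  · refine Continuous.aestronglyMeasurable (Continuous.mul (Continuous.mul ?_ continuous_const) ?_)
    · exact continuous_finset_prod _ fun l _ => continuous_const.mul
        (Complex.continuous_ofReal.comp (EuclideanSpace.proj (j.1 l)).continuous)
    · exact Complex.continuous_ofReal.comp (continuous_const.mul
        ((Continuous.rpow_const (by continuity) fun y => Or.inl (by positivity))))
  · have hs : (0:ℝ) < ‖x‖^2 + ‖y‖^2 := by positivity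
    have hE : (0:ℝ) ≤ (‖x‖^2 + ‖y‖^2) ^ (-((d:ℝ)+(k:ℝ)/2)) := by positivity
    rw [Kterm, norm_mul, norm_mul, norm_prod, norm_prod]
    have e1 : ∏ l ∈ S, ‖Complex.I * ((y (j.1 l)):ℂ)‖ ≤ ‖y‖ ^ S.card := by
      rw [Finset.prod_congr rfl (fun l _ => by
        rw [norm_mul, Complex.norm_I, one_mul, Complex.norm_real, Real.norm_eq_abs])]
      calc ∏ l ∈ S, |y (j.1 l)| ≤ ∏ l ∈ S, ‖y‖ :=
            Finset.prod_le_prod (fun l _ => abs_nonneg _) (fun l _ => coord_le_norm y (j.1 l))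
        _ = ‖y‖ ^ S.card := Finset.prod_const _
    have e3 : ∏ l ∈ Finset.univ \ S, ‖((x (j.1 l)):ℂ)‖ = ∏ l ∈ Finset.univ \ S, |x (j.1 l)| :=
      Finset.prod_congr rfl fun l _ => by rw [Complex.norm_real, Real.norm_eq_abs]
    have e4 : ‖((rieszConstC k d * (‖x‖^2 + ‖y‖^2) ^ (-((d:ℝ)+(k:ℝ)/2)) : ℝ) : ℂ)‖
        = |rieszConstC k d| * (‖x‖^2 + ‖y‖^2) ^ (-((d:ℝ)+(k:ℝ)/2)) := by
      rw [Complex.norm_real, Real.norm_eq_abs, abs_mul, abs_of_nonneg hE]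
    rw [e3, e4]
    have hprodx : (0:ℝ) ≤ ∏ l ∈ Finset.univ \ S, |x (j.1 l)| :=
      Finset.prod_nonneg fun l _ => abs_nonneg _
    calc (∏ l ∈ S, ‖Complex.I * ((y (j.1 l)):ℂ)‖) * (∏ l ∈ Finset.univ \ S, |x (j.1 l)|)
          * (|rieszConstC k d| * (‖x‖^2 + ‖y‖^2) ^ (-((d:ℝ)+(k:ℝ)/2)))
        ≤ (‖y‖ ^ S.card) * (∏ l ∈ Finset.univ \ S, |x (j.1 l)|)
          * (|rieszConstC k d| * (‖x‖^2 + ‖y‖^2) ^ (-((d:ℝ)+(k:ℝ)/2))) := by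
          apply mul_le_mul_of_nonneg_right (mul_le_mul_of_nonneg_right e1 hprodx)
          positivity
      _ = C * (‖y‖ ^ S.card * (‖x‖^2 + ‖y‖^2) ^ (-((d:ℝ)+(k:ℝ)/2))) := by
          rw [hC]; ring

lemma Kterm_vanish (d k : ℕ) (j : Idx d k) (x : Ed d) (S : Finset (Fin k)) (hS : S.Nonempty)
    (p : ℝ → Prop) (hA : MeasurableSet {y : Ed d | p ‖y‖}) :
    ∫ y in {y : Ed d | p ‖y‖}, Kterm d k j x S y = 0 := by
  obtain ⟨l0, hl0⟩ := hS
  rw [← integral_indicator hA]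
  apply integral_reflection_zero _ (j.1 l0)
  intro y
  have hmem : (negC d (j.1 l0) y ∈ {y : Ed d | p ‖y‖}) ↔ (y ∈ {y : Ed d | p ‖y‖}) := by
    simp only [Set.mem_setOf_eq, negC_norm]
  have hterm : Kterm d k j x S (negC d (j.1 l0) y) = - Kterm d k j x S y := by
    rw [Kterm, Kterm, negC_norm]
    rw [← Finset.mul_prod_erase S (fun l => Complex.I * (((negC d (j.1 l0) y) (j.1 l)) : ℂ)) hl0,
        ← Finset.mul_prod_erase S (fun l => Complex.I * ((y (j.1 l)) : ℂ)) hl0]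
    have h1 : ∏ l ∈ S.erase l0, (Complex.I * (((negC d (j.1 l0) y) (j.1 l)) : ℂ))
        = ∏ l ∈ S.erase l0, (Complex.I * ((y (j.1 l)) : ℂ)) :=
      Finset.prod_congr rfl fun l hl => by
        rw [negC_apply, if_neg fun h => (Finset.mem_erase.mp hl).1 (j.2 h)]
    rw [h1, negC_apply, if_pos rfl]
    push_cast
    ring
  by_cases hy : y ∈ {y : Ed d | p ‖y‖}
  · rw [Set.indicator_of_mem (hmem.mpr hy), Set.indicator_of_mem hy, hterm]
  · rw [Set.indicator_of_notMem (fun h => hy (hmem.mp h)), Set.indicator_of_notMem hy, neg_zero]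

lemma Kterm_empty (d k : ℕ) (j : Idx d k) (x : Ed d) (y : Ed d) :
    Kterm d k j x ∅ y = ((Pmon d k j x * rieszConstC k d : ℝ) : ℂ)
      * ((((‖x‖^2 + ‖y‖^2) ^ (-((d:ℝ)+(k:ℝ)/2)) : ℝ)) : ℂ) := by
  rw [Kterm, Pmon, Finset.prod_empty, one_mul, Finset.sdiff_empty]
  push_cast
  ring

/-- computing the fibrewise integral of the complex kernel:
`∫_{ℝ^d} γ̃_{k,d} P_j(x+iy) |x+iy|^{-(2d+k)} 1_{|x+iy|≥t} dy = 𝒦_j^t(x)`,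
and for `|x| ≥ t` this equals `γ_{k,d} P_j(x) |x|^{-(d+k)}`. -/
theorem kernel_restriction (k d : ℕ) (hk : 1 ≤ k) (hkd : k ≤ d)
    (j : Idx d k) (t : ℝ) (ht : 0 < t) (x : Ed d) (hx : x ≠ 0) :
    (∫ y in {y : Ed d | t ≤ Real.sqrt (‖x‖ ^ 2 + ‖y‖ ^ 2)},
        (rieszConstC k d : ℂ) * (∏ l, ((x (j.1 l) : ℂ) + Complex.I * (y (j.1 l) : ℂ)))
          / ((Real.sqrt (‖x‖ ^ 2 + ‖y‖ ^ 2) : ℂ)) ^ (2 * d + k))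
        = (Kres d k j t x : ℂ) ∧
    (t ≤ ‖x‖ →
      (∫ y in {y : Ed d | t ≤ Real.sqrt (‖x‖ ^ 2 + ‖y‖ ^ 2)},
          (rieszConstC k d : ℂ) * (∏ l, ((x (j.1 l) : ℂ) + Complex.I * (y (j.1 l) : ℂ)))
            / ((Real.sqrt (‖x‖ ^ 2 + ‖y‖ ^ 2) : ℂ)) ^ (2 * d + k))
          = ((rieszConst k d * Pmon d k j x / ‖x‖ ^ (d + k)) : ℂ)) := by
  have hd : 1 ≤ d := le_trans hk hkd
  have ha : 0 < ‖x‖ := norm_pos_iff.mpr hx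
  haveI : Nonempty (Fin d) := ⟨⟨0, by omega⟩⟩
  haveI : Nontrivial (Ed d) := by
    refine ⟨EuclideanSpace.single ⟨0, by omega⟩ 1, 0, fun h => ?_⟩
    have h2 := congrArg norm h
    rw [EuclideanSpace.norm_single, norm_zero] at h2
    norm_num at h2
  set A := {y : Ed d | t ≤ Real.sqrt (‖x‖ ^ 2 + ‖y‖ ^ 2)} with hAdef
  have hA : MeasurableSet A := by
    rw [hAdef]
    exact measurableSet_le measurable_const
      (Real.continuous_sqrt.comp (continuous_const.add (continuous_norm.pow 2))).measurable
  set R : ℝ := ∫ y in A, (‖x‖^2 + ‖y‖^2) ^ (-((d:ℝ)+(k:ℝ)/2)) with hRdef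
  have hapow : ‖x‖ ^ (-((d:ℝ)+(k:ℝ))) = (‖x‖ ^ (d+k:ℕ))⁻¹ := by
    rw [← Real.rpow_natCast ‖x‖ (d+k), ← Real.rpow_neg ha.le]
    congr 1; push_cast; ring
  -- Step 1 : the integral equals `↑(γ̃ ⬝ P ⬝ R)`
  have key1 : (∫ y in A, (rieszConstC k d : ℂ)
        * (∏ l, ((x (j.1 l) : ℂ) + Complex.I * (y (j.1 l) : ℂ)))
        / ((Real.sqrt (‖x‖ ^ 2 + ‖y‖ ^ 2) : ℂ)) ^ (2 * d + k))
      = ((rieszConstC k d * Pmon d k j x * R : ℝ) : ℂ) := by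
    have hpt : ∀ y : Ed d,
        (rieszConstC k d : ℂ) * (∏ l, ((x (j.1 l) : ℂ) + Complex.I * (y (j.1 l) : ℂ)))
          / ((Real.sqrt (‖x‖ ^ 2 + ‖y‖ ^ 2) : ℂ)) ^ (2 * d + k)
        = ∑ S ∈ (Finset.univ : Finset (Fin k)).powerset, Kterm d k j x S y := by
      intro y
      have hs : (0:ℝ) < ‖x‖^2 + ‖y‖^2 := by positivity
      have hpow : ((Real.sqrt (‖x‖^2 + ‖y‖^2) : ℂ)) ^ (2*d+k)
          = ((((‖x‖^2 + ‖y‖^2) ^ (((d:ℝ)+(k:ℝ)/2)) : ℝ)) : ℂ) := by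
        rw [← Complex.ofReal_pow]
        congr 1
        rw [Real.sqrt_eq_rpow, ← Real.rpow_natCast ((‖x‖^2 + ‖y‖^2) ^ ((1:ℝ)/2)) (2*d+k),
          ← Real.rpow_mul hs.le]
        congr 1
        push_cast; ring
      have hprod : (∏ l, ((x (j.1 l):ℂ) + Complex.I * (y (j.1 l):ℂ)))
          = ∑ S ∈ (Finset.univ : Finset (Fin k)).powerset,
              (∏ l ∈ S, Complex.I * (y (j.1 l):ℂ)) * ∏ l ∈ Finset.univ \ S, ((x (j.1 l):ℂ)) := by
        rw [← Finset.prod_add]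
        exact Finset.prod_congr rfl fun l _ => add_comm _ _
      rw [hpow, hprod, div_eq_mul_inv, Finset.mul_sum, Finset.sum_mul]
      refine Finset.sum_congr rfl fun S _ => ?_
      rw [Kterm, Real.rpow_neg hs.le, Complex.ofReal_mul, Complex.ofReal_inv]
      ring
    rw [setIntegral_congr_fun hA fun y _ => hpt y]
    rw [integral_finset_sum _ fun S _ => (Kterm_integrable d k hd j hx S).restrict]
    rw [Finset.sum_eq_single_of_mem ∅ (Finset.empty_mem_powerset _) (fun S _ hSne =>
      Kterm_vanish d k j x S (Finset.nonempty_iff_ne_empty.mpr hSne)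
        (fun r => t ≤ Real.sqrt (‖x‖^2 + r^2)) hA)]
    rw [show (∫ y in A, Kterm d k j x ∅ y)
        = ∫ y in A, ((Pmon d k j x * rieszConstC k d : ℝ):ℂ)
            * ((((‖x‖^2 + ‖y‖^2) ^ (-((d:ℝ)+(k:ℝ)/2)) : ℝ)):ℂ)
      from setIntegral_congr_fun hA fun y _ => Kterm_empty d k j x y]
    rw [integral_const_mul]
    have hIof : (∫ y in A, ((((‖x‖^2 + ‖y‖^2) ^ (-((d:ℝ)+(k:ℝ)/2)) : ℝ)) : ℂ)) = ((R : ℝ) : ℂ) := by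
      rw [hRdef]; exact integral_ofReal
    rw [hIof]
    push_cast
    ring
  -- Step 2 : radial reduction
  set G : ℝ → ℝ := fun r => if t ≤ Real.sqrt (‖x‖^2 + r^2)
      then (‖x‖^2 + r^2) ^ (-((d:ℝ)+(k:ℝ)/2)) else 0 with hGdef
  have hR1 : R = surf d * ∫ r in Set.Ioi (0:ℝ), r ^ (d-1) * G r := by
    have h1 : ∀ y : Ed d,
        A.indicator (fun y : Ed d => (‖x‖^2 + ‖y‖^2) ^ (-((d:ℝ)+(k:ℝ)/2))) y = G ‖y‖ := by
      intro y
      by_cases hy : t ≤ Real.sqrt (‖x‖^2 + ‖y‖^2)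
      · rw [Set.indicator_of_mem (by rw [hAdef]; exact hy)]
        simp only [hGdef]
        rw [if_pos hy]
      · rw [Set.indicator_of_notMem (by rw [hAdef]; exact hy)]
        simp only [hGdef]
        rw [if_neg hy]
    rw [hRdef, ← integral_indicator hA]
    simp only [h1]
    rw [integral_fun_norm_addHaar (volume : Measure (Ed d)) G, finrank_euclideanSpace_fin,
      measureReal_def, EuclideanSpace.volume_ball]
    simp only [Fintype.card_fin, ENNReal.ofReal_one, one_pow, one_mul, smul_eq_mul, nsmul_eq_mul]
    rw [ENNReal.toReal_ofReal (div_nonneg (pow_nonneg (Real.sqrt_nonneg _) _)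
      (Real.Gamma_pos_of_pos (by positivity)).le)]
    rw [← mul_assoc, surf_eq d hd]
  -- Step 3 : the two cases
  have main : (∫ y in A, (rieszConstC k d : ℂ)
        * (∏ l, ((x (j.1 l) : ℂ) + Complex.I * (y (j.1 l) : ℂ)))
        / ((Real.sqrt (‖x‖ ^ 2 + ‖y‖ ^ 2) : ℂ)) ^ (2 * d + k))
      = (Kres d k j t x : ℂ) := by
    rw [key1]
    by_cases hts : t ≤ ‖x‖
    · have hG : ∀ r ∈ Set.Ioi (0:ℝ), r ^ (d-1) * G r
          = r ^ (d-1) * (‖x‖^2 + r^2) ^ (-((d:ℝ)+(k:ℝ)/2)) := by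
        intro r _
        have h6 : t ≤ Real.sqrt (‖x‖^2 + r^2) := by
          calc t ≤ ‖x‖ := hts
            _ = Real.sqrt (‖x‖^2) := (Real.sqrt_sq (norm_nonneg x)).symm
            _ ≤ Real.sqrt (‖x‖^2 + r^2) := Real.sqrt_le_sqrt (by nlinarith [sq_nonneg r])
        simp only [hGdef]
        rw [if_pos h6]
      have hRval : R = surf d * (‖x‖ ^ (-((d:ℝ)+(k:ℝ)))
          * (Real.Gamma ((d:ℝ)/2) * Real.Gamma (((d:ℝ)+(k:ℝ))/2)
              / (2 * Real.Gamma ((d:ℝ)+(k:ℝ)/2)))) := by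
        rw [hR1, setIntegral_congr_fun measurableSet_Ioi hG,
          show Set.Ioi (0:ℝ) = Set.Ioi (‖x‖ * 0) from by rw [mul_zero],
          scale_int d k hd ha 0, J_val d k hd hk]
      have hfin : rieszConstC k d * Pmon d k j x * R
          = rieszConst k d * Pmon d k j x / ‖x‖ ^ (d+k) := by
        rw [hRval, ← const_id k d hk hd, hapow]
        ring
      simp only [Kres]
      rw [if_pos hts, hfin]
    · have hlt : ‖x‖ < t := lt_of_not_ge hts
      have hb2 : (0:ℝ) < t^2 - ‖x‖^2 := by nlinarith
      set b := Real.sqrt (t^2 - ‖x‖^2) with hbdef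
      have hb : 0 < b := Real.sqrt_pos.mpr hb2
      have hstep1 : (∫ r in Set.Ioi (0:ℝ), r ^ (d-1) * G r)
          = ∫ r in Set.Ioi b, r ^ (d-1) * (‖x‖^2 + r^2) ^ (-((d:ℝ)+(k:ℝ)/2)) := by
        have hpt2 : ∀ r ∈ Set.Ioi (0:ℝ), r ^ (d-1) * G r
            = Set.indicator (Set.Ici b)
                (fun r => r ^ (d-1) * (‖x‖^2 + r^2) ^ (-((d:ℝ)+(k:ℝ)/2))) r := by
          intro r hr
          have hr0 : (0:ℝ) < r := hr
          have hs : (0:ℝ) < ‖x‖^2 + r^2 := by positivity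
          by_cases hrb : b ≤ r
          · rw [Set.indicator_of_mem (Set.mem_Ici.mpr hrb)]
            have h6 : t ≤ Real.sqrt (‖x‖^2 + r^2) := by
              rw [Real.le_sqrt ht.le hs.le]
              have h7 : b^2 ≤ r^2 := pow_le_pow_left₀ hb.le hrb 2
              rw [hbdef, Real.sq_sqrt hb2.le] at h7
              linarith
            simp only [hGdef]
            rw [if_pos h6]
          · rw [Set.indicator_of_notMem (fun hmem => hrb (Set.mem_Ici.mp hmem))]
            have h6 : ¬ t ≤ Real.sqrt (‖x‖^2 + r^2) := by
              intro hcon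
              apply hrb
              rw [Real.le_sqrt ht.le hs.le] at hcon
              calc b ≤ Real.sqrt (r^2) := Real.sqrt_le_sqrt (by linarith)
                _ = r := Real.sqrt_sq hr0.le
            simp only [hGdef]
            rw [if_neg h6, mul_zero]
        rw [setIntegral_congr_fun measurableSet_Ioi hpt2,
          setIntegral_indicator measurableSet_Ici,
          show Set.Ioi (0:ℝ) ∩ Set.Ici b = Set.Ici b from
            Set.inter_eq_right.mpr (fun r hr => lt_of_lt_of_le hb hr),
          integral_Ici_eq_integral_Ioi]
      have hbb : ‖x‖ * Real.sqrt (t^2/‖x‖^2 - 1) = b := by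
        rw [hbdef,
          show ‖x‖ * Real.sqrt (t^2/‖x‖^2 - 1) = Real.sqrt (‖x‖^2) * Real.sqrt (t^2/‖x‖^2-1)
            from by rw [Real.sqrt_sq (norm_nonneg x)],
          ← Real.sqrt_mul (sq_nonneg ‖x‖)]
        congr 1
        field_simp
      have hRval : R = surf d * (‖x‖ ^ (-((d:ℝ)+(k:ℝ)))
          * ∫ r in Set.Ioi (Real.sqrt (t^2/‖x‖^2-1)),
              r ^ (d-1) * (1 + r^2) ^ (-((d:ℝ)+(k:ℝ)/2))) := by
        rw [hR1, hstep1, ← hbb, scale_int d k hd ha _]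
      have hfin : rieszConstC k d * Pmon d k j x * R
          = rieszConstC k d * surf d * Pmon d k j x / ‖x‖ ^ (d+k)
            * ∫ r in Set.Ioi (Real.sqrt (t^2/‖x‖^2-1)),
                r ^ (d-1) * (1 + r^2) ^ (-((d:ℝ)+(k:ℝ)/2)) := by
        rw [hRval, hapow]
        ring
      simp only [Kres]
      rw [if_neg hts, hfin]
  exact ⟨main, fun h' => by
    rw [main]
    simp only [Kres]
    rw [if_pos h']
    push_cast
    ring⟩
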